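/- arXiv:1610.01845 — 4 statements merged into one kernel-verified Lean document; each statement's English description precedes it below -/
import Mathlib

section
/- There exists p₀ > 0 such that for every p ∈ (0, p₀] and every μ ∈ ℝ, the function y ↦ E(y,p,μ) on ℝ has a unique global maximum point ȳ ∈ ℝ, and moreover ∂²E/∂y²(ȳ,p,μ) < 0. (In other words, the strip {(p,μ) : 0 < p ≤ p₀, μ ∈ ℝ} consists entirely of single-phase points.) -/
/-- The single-cell partition function `K(y,p,μ)` with cell volume `υ` and ratio `a`. -/
noncomputable def K (υ a y p μ : ℝ) : ℝ :=
  ∑' n : ℕ, (υ ^ n / (Nat.factorial n : ℝ)) *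
    Real.exp ((y + μ) * n - (a * p / 2) * (n : ℝ) ^ 2)

/-- The function `E(y,p,μ) = -y²/(2p) + ln K(y,p,μ)`. -/
noncomputable def E (υ a y p μ : ℝ) : ℝ :=
  -(y ^ 2) / (2 * p) + Real.log (K υ a y p μ)

/-!
Write `x = y + μ` and `β = a p`. Then `E'' = -1/p + Var N`, where `N` has the weights
`wₙ = υⁿ/n! · exp (x n - β n²/2)`. These weights are `β`-strongly log-concave,
`wₙ₊₂ wₙ e^β ≤ wₙ₊₁²`, and summing `(n - k)(wₙ - wₙ₊₁)` by parts around the mode `k` shows that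
such a sequence has `(1 - ε) Var N ≤ 1/β + 1/ε`. As `a > 1`, taking `ε = (a - 1)/(2a)` gives
`Var N < a/β = 1/p` once `p` is small, so `E` is strictly concave. Since `log K ≤ υ + x²/(2β)`,
`E` tends to `-∞` at infinity, so it attains its maximum, which is unique by strict concavity.
-/

open Real Filter Topology Finset
open scoped Nat

lemma two_mul_abs_le {ε : ℝ} (hε : 0 < ε) (x : ℝ) : 2 * |x| ≤ ε * x ^ 2 + 1 / ε := by
  rw [← sq_abs x, ← sub_nonneg]
  have h : ε * |x| ^ 2 + 1 / ε - 2 * |x| = (ε * |x| - 1) ^ 2 / ε := by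
    field_simp
    ring
  rw [h]
  positivity

lemma mul_le_sub_of_mul_exp_le {x y t : ℝ} (hx : 0 ≤ x) (h : x * exp t ≤ y) : t * x ≤ y - x := by
  nlinarith [add_one_le_exp t]

lemma tsum_le_tsum_of_le_shift {Φ T : ℕ → ℝ} {k : ℕ} (hΦ : Summable Φ) (hT : Summable T)
    (hk : Φ k = 0) (hleft : ∀ m < k, Φ m ≤ T m) (hright : ∀ d, Φ (d + 1 + k) ≤ T (d + k)) :
    ∑' n, Φ n ≤ ∑' n, T n := by
  rw [← hΦ.sum_add_tsum_nat_add k, ← hT.sum_add_tsum_nat_add k,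
    ((summable_nat_add_iff k).mpr hΦ).tsum_eq_zero_add, zero_add, hk, zero_add]
  refine add_le_add (sum_le_sum fun m hm => hleft m (mem_range.mp hm))
    (Summable.tsum_le_tsum hright ?_ ((summable_nat_add_iff k).mpr hT))
  exact ((summable_nat_add_iff (k + 1)).mpr hΦ).congr fun d => by rw [add_comm k 1, add_assoc]

section LogConcaveSequence

variable {w : ℕ → ℝ} {β : ℝ}

lemma exists_succ_le_of_summable (hw : ∀ n, 0 < w n) (hs : Summable w) :
    ∃ k, w (k + 1) ≤ w k := by
  by_contra! h
  have hmono : Monotone w := monotone_nat_of_le_succ fun n => (h n).le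
  exact (hw 0).not_ge (ge_of_tendsto' hs.tendsto_atTop_zero fun n => hmono n.zero_le)

lemma summable_mul_of_abs_le_sq (hw : ∀ n, 0 ≤ w n) (hs : Summable w)
    (hs2 : Summable fun n : ℕ => (n : ℝ) ^ 2 * w n) {f : ℕ → ℝ} (C : ℝ)
    (hf : ∀ n, |f n| ≤ C * ((n : ℝ) ^ 2 + 1)) : Summable fun n => f n * w n := by
  refine .of_norm_bounded ((hs2.add hs).mul_left C) fun n => ?_
  rw [norm_mul, norm_of_nonneg (hw n)]
  calc |f n| * w n ≤ C * ((n : ℝ) ^ 2 + 1) * w n := mul_le_mul_of_nonneg_right (hf n) (hw n)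
    _ = C * ((n : ℝ) ^ 2 * w n + w n) := by ring

lemma summable_sub_sq_mul (hw : ∀ n, 0 ≤ w n) (hs : Summable w)
    (hs2 : Summable fun n : ℕ => (n : ℝ) ^ 2 * w n) (c : ℝ) :
    Summable fun n : ℕ => ((n : ℝ) - c) ^ 2 * w n :=
  summable_mul_of_abs_le_sq hw hs hs2 (2 * c ^ 2 + 2) fun n => by
    rw [abs_of_nonneg (sq_nonneg _)]
    nlinarith [sq_nonneg ((n : ℝ) + c), mul_nonneg (sq_nonneg c) (sq_nonneg (n : ℝ))]

lemma summable_abs_sub_mul (hw : ∀ n, 0 ≤ w n) (hs : Summable w)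
    (hs2 : Summable fun n : ℕ => (n : ℝ) ^ 2 * w n) (c : ℝ) :
    Summable fun n : ℕ => |(n : ℝ) - c| * w n :=
  .of_nonneg_of_le (fun n => mul_nonneg (abs_nonneg _) (hw n))
    (fun n => mul_le_mul_of_nonneg_right (show |(n : ℝ) - c| ≤ ((n : ℝ) - c) ^ 2 + 1 by
      nlinarith [two_mul_abs_le one_pos ((n : ℝ) - c), abs_nonneg ((n : ℝ) - c)]) (hw n))
    ((summable_sub_sq_mul hw hs hs2 c).add hs |>.congr fun n => by ring)

lemma tsum_sq_mul_mul_tsum_sub_sq_le (hw : ∀ n, 0 ≤ w n) (hs : Summable w)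
    (hs2 : Summable fun n : ℕ => (n : ℝ) ^ 2 * w n) (c : ℝ) :
    (∑' n : ℕ, (n : ℝ) ^ 2 * w n) * ∑' n, w n - (∑' n : ℕ, (n : ℝ) * w n) ^ 2
      ≤ (∑' n, w n) * ∑' n : ℕ, ((n : ℝ) - c) ^ 2 * w n := by
  have hs1 : Summable fun n : ℕ => (n : ℝ) * w n :=
    (summable_abs_sub_mul hw hs hs2 0).congr fun n => by simp
  have hexp : ∑' n : ℕ, ((n : ℝ) - c) ^ 2 * w n
      = ∑' n : ℕ, (n : ℝ) ^ 2 * w n - 2 * c * ∑' n : ℕ, (n : ℝ) * w n + c ^ 2 * ∑' n, w n := by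
    rw [← tsum_mul_left, ← tsum_mul_left, ← hs2.tsum_sub (hs1.mul_left _),
      ← (hs2.sub (hs1.mul_left _)).tsum_add (hs.mul_left _)]
    exact tsum_congr fun n => by ring
  rw [hexp]
  nlinarith [sq_nonneg (∑' n : ℕ, (n : ℝ) * w n - c * ∑' n, w n)]

lemma hasSum_sub_mul_sub_succ (hs : Summable w) (hs1 : Summable fun n : ℕ => (n : ℝ) * w n)
    (c : ℝ) : HasSum (fun n : ℕ => ((n : ℝ) - c) * (w n - w (n + 1)))
      (∑' n, w n - (c + 1) * w 0) := by
  have hA : Summable fun n : ℕ => ((n : ℝ) - c) * w n := by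
    simpa only [sub_mul] using hs1.sub (hs.mul_left c)
  have hs' := (summable_nat_add_iff 1).mpr hs
  have hB : Summable fun n : ℕ => ((n : ℝ) - c) * w (n + 1) := by
    refine (((summable_nat_add_iff 1).mpr hA).sub hs').congr fun n => ?_
    push_cast
    ring
  have hshift : ∑' n : ℕ, ((n : ℝ) - c) * w n
      = -c * w 0 + (∑' n : ℕ, ((n : ℝ) - c) * w (n + 1) + ∑' n : ℕ, w (n + 1)) := by
    rw [hA.tsum_eq_zero_add, ← hB.tsum_add hs']
    push_cast
    congr 1
    · ring
    · exact tsum_congr fun n => by ring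
  have hsum : ∑' n, w n - (c + 1) * w 0
      = ∑' n : ℕ, ((n : ℝ) - c) * w n - ∑' n : ℕ, ((n : ℝ) - c) * w (n + 1) := by
    rw [hshift, hs.tsum_eq_zero_add]
    ring
  simpa only [hsum, mul_sub] using hA.hasSum.sub hB.hasSum

variable (hw : ∀ n, 0 < w n) (hlc : ∀ n, w (n + 2) * w n * exp β ≤ w (n + 1) ^ 2)
include hw hlc

lemma mul_exp_le_mul_of_logConcave (i d : ℕ) :
    w (i + d + 1) * w i * exp (β * d) ≤ w (i + d) * w (i + 1) := by
  induction d with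
  | zero => simp [mul_comm]
  | succ d ih =>
    have key : w (i + d + 2) * w i * exp (β * (d + 1)) * w (i + d)
        ≤ w (i + d + 1) * w (i + 1) * w (i + d) := by
      calc _ = (w (i + d + 2) * w (i + d) * exp β) * (w i * exp (β * d)) := by
              rw [mul_add, mul_one, exp_add]; ring
        _ ≤ w (i + d + 1) ^ 2 * (w i * exp (β * d)) := by
              gcongr
              · exact mul_nonneg (hw i).le (exp_pos _).le
              · exact hlc (i + d)
        _ = w (i + d + 1) * (w (i + d + 1) * w i * exp (β * d)) := by ring
        _ ≤ w (i + d + 1) * (w (i + d) * w (i + 1)) := by gcongr; exact (hw _).le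
        _ = w (i + d + 1) * w (i + 1) * w (i + d) := by ring
    push_cast
    simpa only [← add_assoc] using le_of_mul_le_mul_right key (hw _)

lemma mul_le_sub_succ_of_logConcave {k : ℕ} (hk : w (k + 1) ≤ w k) (d : ℕ) :
    β * d * w (k + d + 1) ≤ w (k + d) - w (k + d + 1) := by
  refine mul_le_sub_of_mul_exp_le (hw _).le (le_of_mul_le_mul_right ?_ (hw k))
  calc w (k + d + 1) * exp (β * d) * w k = w (k + d + 1) * w k * exp (β * d) := by ring
    _ ≤ w (k + d) * w (k + 1) := mul_exp_le_mul_of_logConcave hw hlc k d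
    _ ≤ w (k + d) * w k := by gcongr; exact (hw _).le

lemma mul_le_succ_sub_of_logConcave {m j : ℕ} (hk : w (m + j) ≤ w (m + j + 1)) :
    β * j * w m ≤ w (m + 1) - w m := by
  refine mul_le_sub_of_mul_exp_le (hw _).le (le_of_mul_le_mul_left ?_ (hw (m + j + 1)))
  calc w (m + j + 1) * (w m * exp (β * j)) = w (m + j + 1) * w m * exp (β * j) := by ring
    _ ≤ w (m + j) * w (m + 1) := mul_exp_le_mul_of_logConcave hw hlc m j
    _ ≤ w (m + j + 1) * w (m + 1) := by gcongr; exact (hw _).le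

/-- Left of the mode `k`, log-concavity gives `β ((n - k)² - |n - k|) wₙ ≤ (n - k)(wₙ - wₙ₊₁)`;
right of it, `β (n - k)² wₙ₊₁ ≤ (n - k)(wₙ - wₙ₊₁)`, and the index shift costs the term
`2 |n - k|`. The sum of `(n - k)(wₙ - wₙ₊₁)` telescopes to at most `∑ w`. -/
lemma exists_mul_tsum_sq_sub_two_abs_le (hβ : 0 ≤ β) (hs : Summable w)
    (hs2 : Summable fun n : ℕ => (n : ℝ) ^ 2 * w n) :
    ∃ k : ℕ, β * ∑' n : ℕ, (((n : ℝ) - k) ^ 2 - 2 * |(n : ℝ) - k|) * w n ≤ ∑' n, w n := by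
  classical
  have hmode := exists_succ_le_of_summable hw hs
  set k := Nat.find hmode
  refine ⟨k, ?_⟩
  set Φ : ℕ → ℝ := fun n => β * ((((n : ℝ) - k) ^ 2 - 2 * |(n : ℝ) - k|) * w n) with hΦ
  set T : ℕ → ℝ := fun n => ((n : ℝ) - k) * (w n - w (n + 1)) with hT
  have hw0 : ∀ n, 0 ≤ w n := fun n => (hw n).le
  have hT_sum : HasSum T (∑' n, w n - (k + 1) * w 0) :=
    hasSum_sub_mul_sub_succ hs ((summable_abs_sub_mul hw0 hs hs2 0).congr fun n => by simp) k
  have hΦs : Summable Φ :=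
    (summable_sub_sq_mul hw0 hs hs2 k).sub ((summable_abs_sub_mul hw0 hs hs2 k).mul_left 2)
      |>.mul_left β |>.congr fun n => by ring
  have hleft : ∀ m < k, Φ m ≤ T m := by
    intro m hm
    obtain ⟨j, hj⟩ : ∃ j, m + j + 1 = k := ⟨k - m - 1, by omega⟩
    have hk : w (m + j) ≤ w (m + j + 1) := not_le.mp (Nat.find_min hmode (by omega)) |>.le
    have h := mul_le_succ_sub_of_logConcave hw hlc hk
    have hkm : (m : ℝ) - k = -(j + 1) := by rw [← hj]; push_cast; ring
    simp only [hΦ, hT, hkm, abs_neg, abs_of_nonneg (by positivity : (0 : ℝ) ≤ j + 1)]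
    nlinarith [mul_le_mul_of_nonneg_left h (by positivity : (0 : ℝ) ≤ j + 1),
      mul_nonneg (mul_nonneg hβ (by positivity : (0 : ℝ) ≤ j + 1)) (hw0 m)]
  have hright : ∀ d : ℕ, Φ (d + 1 + k) ≤ T (d + k) := by
    intro d
    have h := mul_le_sub_succ_of_logConcave hw hlc (Nat.find_spec hmode) d
    rw [show d + 1 + k = k + d + 1 by omega, show d + k = k + d by omega]
    have hdk : ((k + d + 1 : ℕ) : ℝ) - k = d + 1 := by push_cast; ring
    have hdk' : ((k + d : ℕ) : ℝ) - k = d := by push_cast; ring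
    simp only [hΦ, hT, hdk, hdk', abs_of_nonneg (by positivity : (0 : ℝ) ≤ d + 1)]
    nlinarith [mul_le_mul_of_nonneg_left h (by positivity : (0 : ℝ) ≤ d),
      mul_nonneg hβ (hw0 (k + d + 1))]
  calc β * ∑' n : ℕ, (((n : ℝ) - k) ^ 2 - 2 * |(n : ℝ) - k|) * w n = ∑' n, Φ n := tsum_mul_left.symm
    _ ≤ ∑' n, T n :=
        tsum_le_tsum_of_le_shift hΦs hT_sum.summable (by simp [hΦ]) hleft hright
    _ = ∑' n, w n - (k + 1) * w 0 := hT_sum.tsum_eq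
    _ ≤ ∑' n, w n := by nlinarith [hw 0, (k.cast_nonneg : (0 : ℝ) ≤ k)]

lemma exists_one_sub_mul_tsum_sub_sq_le (hβ : 0 < β) {ε : ℝ} (hε : 0 < ε) (hs : Summable w)
    (hs2 : Summable fun n : ℕ => (n : ℝ) ^ 2 * w n) :
    ∃ c : ℝ, (1 - ε) * ∑' n : ℕ, ((n : ℝ) - c) ^ 2 * w n ≤ (1 / β + 1 / ε) * ∑' n, w n := by
  obtain ⟨k, hk⟩ := exists_mul_tsum_sq_sub_two_abs_le hw hlc hβ.le hs hs2
  refine ⟨k, ?_⟩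
  have hw0 : ∀ n, 0 ≤ w n := fun n => (hw n).le
  have hQ := summable_sub_sq_mul hw0 hs hs2 k
  have hA := (summable_abs_sub_mul hw0 hs hs2 k).mul_left 2
  have hsplit : ∑' n : ℕ, (((n : ℝ) - k) ^ 2 - 2 * |(n : ℝ) - k|) * w n
      = ∑' n : ℕ, ((n : ℝ) - k) ^ 2 * w n - ∑' n : ℕ, 2 * (|(n : ℝ) - k| * w n) := by
    rw [← hQ.tsum_sub hA]
    exact tsum_congr fun n => by ring
  have hA_le : ∑' n : ℕ, 2 * (|(n : ℝ) - k| * w n)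
      ≤ ε * ∑' n : ℕ, ((n : ℝ) - k) ^ 2 * w n + 1 / ε * ∑' n, w n := by
    rw [← tsum_mul_left, ← tsum_mul_left, ← (hQ.mul_left ε).tsum_add (hs.mul_left _)]
    refine Summable.tsum_le_tsum (fun n => ?_) hA ((hQ.mul_left ε).add (hs.mul_left _))
    nlinarith [mul_le_mul_of_nonneg_right (two_mul_abs_le hε ((n : ℝ) - k)) (hw0 n)]
  rw [hsplit] at hk
  have hβS : 1 / β * ∑' n, w n = (∑' n, w n) / β := by ring
  rw [add_mul, hβS]
  have := (le_div_iff₀' hβ).mpr hk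
  linarith

lemma variance_le_of_logConcave (hβ : 0 < β) {ε : ℝ} (hε : 0 < ε) (hε1 : ε ≤ 1)
    (hs : Summable w) (hs2 : Summable fun n : ℕ => (n : ℝ) ^ 2 * w n) :
    (1 - ε) * ((∑' n : ℕ, (n : ℝ) ^ 2 * w n) * ∑' n, w n - (∑' n : ℕ, (n : ℝ) * w n) ^ 2)
      ≤ (1 / β + 1 / ε) * (∑' n, w n) ^ 2 := by
  obtain ⟨c, hc⟩ := exists_one_sub_mul_tsum_sub_sq_le hw hlc hβ hε hs hs2
  have hw0 : ∀ n, 0 ≤ w n := fun n => (hw n).le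
  have hS : 0 ≤ ∑' n, w n := tsum_nonneg hw0
  calc _ ≤ (1 - ε) * ((∑' n, w n) * ∑' n : ℕ, ((n : ℝ) - c) ^ 2 * w n) :=
        mul_le_mul_of_nonneg_left (tsum_sq_mul_mul_tsum_sub_sq_le hw0 hs hs2 c) (by linarith)
    _ = (∑' n, w n) * ((1 - ε) * ∑' n : ℕ, ((n : ℝ) - c) ^ 2 * w n) := by ring
    _ ≤ (∑' n, w n) * ((1 / β + 1 / ε) * ∑' n, w n) := mul_le_mul_of_nonneg_left hc hS
    _ = _ := by ring

end LogConcaveSequence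

lemma summable_pow_mul_pow_div_factorial (k : ℕ) {υ : ℝ} (hυ : 0 ≤ υ) :
    Summable fun n : ℕ => (n : ℝ) ^ k * (υ ^ n / n !) := by
  refine .of_nonneg_of_le (fun n => by positivity) (fun n => ?_)
    ((Real.summable_pow_div_factorial (exp 1 * υ)).mul_left (k ! : ℝ))
  have hk : (n : ℝ) ^ k ≤ k ! * exp n := by
    have := pow_div_factorial_le_exp (n : ℝ) n.cast_nonneg k
    rwa [div_le_iff₀ (by positivity), mul_comm] at this
  calc (n : ℝ) ^ k * (υ ^ n / n !) ≤ k ! * exp n * (υ ^ n / n !) := by gcongr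
    _ = k ! * ((exp 1 * υ) ^ n / n !) := by rw [mul_pow, exp_one_pow]; ring

noncomputable def weight (υ β x : ℝ) (n : ℕ) : ℝ :=
  υ ^ n / n ! * exp (x * n - β / 2 * (n : ℝ) ^ 2)

noncomputable def moment (υ β : ℝ) (k : ℕ) (x : ℝ) : ℝ :=
  ∑' n : ℕ, (n : ℝ) ^ k * weight υ β x n

section Weight

variable {υ β : ℝ}

lemma weight_pos (hυ : 0 < υ) (x : ℝ) (n : ℕ) : 0 < weight υ β x n := by
  unfold weight
  positivity

lemma weight_le (hυ : 0 ≤ υ) (hβ : 0 < β) {x R : ℝ} (hx : |x| ≤ R) (n : ℕ) :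
    weight υ β x n ≤ exp (R ^ 2 / (2 * β)) * (υ ^ n / n !) := by
  rw [weight, mul_comm]
  gcongr
  have hxR : x * n ≤ R * n := mul_le_mul_of_nonneg_right ((le_abs_self x).trans hx) n.cast_nonneg
  rw [le_div_iff₀ (by positivity)]
  nlinarith [sq_nonneg (β * n - R)]

lemma weight_logConcave (x : ℝ) (n : ℕ) :
    weight υ β x (n + 2) * weight υ β x n * exp β ≤ weight υ β x (n + 1) ^ 2 := by
  have hexp : exp (x * (n + 2 : ℕ) - β / 2 * ((n + 2 : ℕ) : ℝ) ^ 2)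
      * exp (x * n - β / 2 * (n : ℝ) ^ 2) * exp β
      = exp (x * (n + 1 : ℕ) - β / 2 * ((n + 1 : ℕ) : ℝ) ^ 2) ^ 2 := by
    rw [← exp_add, ← exp_add, ← exp_nat_mul]
    congr 1
    push_cast
    ring
  have hcoef : υ ^ (n + 2) / (n + 2)! * (υ ^ n / n !)
      = (υ ^ (n + 1) / (n + 1)!) ^ 2 * ((n + 1) / (n + 2)) := by
    rw [Nat.factorial_succ (n + 1), Nat.factorial_succ n]
    push_cast
    field_simp
    ring
  have hratio : ((n : ℝ) + 1) / (n + 2) ≤ 1 := by rw [div_le_one (by positivity)]; linarith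
  calc weight υ β x (n + 2) * weight υ β x n * exp β
      = (υ ^ (n + 1) / (n + 1)!) ^ 2 * ((n + 1) / (n + 2))
          * exp (x * (n + 1 : ℕ) - β / 2 * ((n + 1 : ℕ) : ℝ) ^ 2) ^ 2 := by
        simp only [weight]
        rw [← hcoef, ← hexp]
        ring
    _ ≤ (υ ^ (n + 1) / (n + 1)!) ^ 2
          * exp (x * (n + 1 : ℕ) - β / 2 * ((n + 1 : ℕ) : ℝ) ^ 2) ^ 2 := by
        gcongr
        exact mul_le_of_le_one_right (sq_nonneg _) hratio
    _ = weight υ β x (n + 1) ^ 2 := by simp only [weight]; ring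

lemma summable_moment (hυ : 0 < υ) (hβ : 0 < β) (k : ℕ) (x : ℝ) :
    Summable fun n : ℕ => (n : ℝ) ^ k * weight υ β x n :=
  .of_nonneg_of_le (fun n => mul_nonneg (by positivity) (weight_pos hυ x n).le)
    (fun n => (mul_le_mul_of_nonneg_left (weight_le hυ.le hβ le_rfl n) (by positivity)).trans_eq
      (mul_left_comm _ _ _))
    ((summable_pow_mul_pow_div_factorial k hυ.le).mul_left _)

lemma hasDerivAt_weight (x : ℝ) (n : ℕ) :
    HasDerivAt (fun x => weight υ β x n) (n * weight υ β x n) x := by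
  have h := ((((hasDerivAt_id x).mul_const (n : ℝ)).sub_const (β / 2 * (n : ℝ) ^ 2)).exp).const_mul
    (υ ^ n / n ! : ℝ)
  refine HasDerivAt.congr_deriv (f := fun x => weight υ β x n) h ?_
  simp only [weight, id]
  ring

lemma hasDerivAt_moment (hυ : 0 < υ) (hβ : 0 < β) (k : ℕ) (x : ℝ) :
    HasDerivAt (moment υ β k) (moment υ β (k + 1) x) x := by
  refine hasDerivAt_tsum_of_isPreconnected (g := fun (n : ℕ) z => (n : ℝ) ^ k * weight υ β z n)
    (g' := fun (n : ℕ) z => (n : ℝ) ^ (k + 1) * weight υ β z n)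
    ((summable_pow_mul_pow_div_factorial (k + 1) hυ.le).mul_left (exp ((|x| + 1) ^ 2 / (2 * β))))
    Metric.isOpen_ball (convex_ball x 1).isPreconnected (fun n z _ => ?_) (fun n z hz => ?_)
    (Metric.mem_ball_self one_pos) (summable_moment hυ hβ k x) (Metric.mem_ball_self one_pos)
  · have h := (hasDerivAt_weight (υ := υ) (β := β) z n).const_mul ((n : ℝ) ^ k)
    rwa [← mul_assoc, ← pow_succ] at h
  · have hzx : |z| ≤ |x| + 1 := by
      have := abs_sub_abs_le_abs_sub z x
      rw [← Real.dist_eq] at this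
      linarith [Metric.mem_ball.mp hz]
    rw [norm_of_nonneg (mul_nonneg (by positivity) (weight_pos hυ z n).le), mul_left_comm]
    exact mul_le_mul_of_nonneg_left (weight_le hυ.le hβ hzx n) (by positivity)

lemma moment_zero_pos (hυ : 0 < υ) (hβ : 0 < β) (x : ℝ) : 0 < moment υ β 0 x :=
  (summable_moment hυ hβ 0 x).tsum_pos (fun n => mul_nonneg (by positivity) (weight_pos hυ x n).le)
    0 (by simpa using weight_pos hυ x 0)

lemma log_moment_zero_le (hυ : 0 < υ) (hβ : 0 < β) (x : ℝ) :
    log (moment υ β 0 x) ≤ υ + x ^ 2 / (2 * β) := by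
  have hsum := (NormedSpace.expSeries_div_hasSum_exp υ).mul_left (exp (|x| ^ 2 / (2 * β)))
  rw [← exp_eq_exp_ℝ] at hsum
  have hle : moment υ β 0 x ≤ exp (|x| ^ 2 / (2 * β)) * exp υ := by
    refine hasSum_le (fun n => ?_) (summable_moment hυ hβ 0 x).hasSum hsum
    rw [pow_zero, one_mul]
    exact weight_le hυ.le hβ le_rfl n
  rw [← exp_add, sq_abs] at hle
  calc log (moment υ β 0 x) ≤ x ^ 2 / (2 * β) + υ :=
        (log_le_iff_le_exp (moment_zero_pos hυ hβ x)).mpr hle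
    _ = υ + x ^ 2 / (2 * β) := add_comm _ _

lemma one_sub_mul_variance_le (hυ : 0 < υ) (hβ : 0 < β) {ε : ℝ} (hε : 0 < ε) (hε1 : ε ≤ 1)
    (x : ℝ) :
    (1 - ε) * (moment υ β 2 x * moment υ β 0 x - moment υ β 1 x ^ 2)
      ≤ (1 / β + 1 / ε) * moment υ β 0 x ^ 2 := by
  have h := variance_le_of_logConcave (fun n => weight_pos hυ x n) (weight_logConcave x) hβ hε hε1
    (summable_moment hυ hβ 0 x |>.congr fun n => by simp) (summable_moment hυ hβ 2 x)
  simpa only [moment, pow_zero, one_mul, pow_one] using h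

end Weight

lemma lt_one_div_of_one_sub_mul_le {a p V : ℝ} (ha : 1 < a) (hp : 0 < p)
    (hp₀ : p ≤ (a - 1) ^ 2 / (8 * a ^ 2))
    (hV : (1 - (a - 1) / (2 * a)) * V ≤ 1 / (a * p) + 1 / ((a - 1) / (2 * a))) : V < 1 / p := by
  have ha1 : 0 < a - 1 := sub_pos.mpr ha
  have ha0 : 0 < a := by linarith
  rw [le_div_iff₀ (by positivity)] at hp₀
  have hV' : (a + 1) * V * p * (a - 1) ≤ 2 * (a - 1) + 4 * a ^ 2 * p := by
    have e1 : 1 - (a - 1) / (2 * a) = (a + 1) / (2 * a) := by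
      field_simp
      ring
    have e2 : 1 / (a * p) + 1 / ((a - 1) / (2 * a))
        = (2 * (a - 1) + 4 * a ^ 2 * p) / (2 * a * p * (a - 1)) := by
      field_simp
      ring
    rw [e1, e2, div_mul_eq_mul_div, div_le_div_iff₀ (by positivity) (by positivity)] at hV
    nlinarith
  rw [lt_div_iff₀ hp]
  nlinarith

section FreeEnergy

variable {υ a p μ : ℝ}

lemma E_eq_log_moment (y : ℝ) :
    E υ a y p μ = -(y ^ 2) / (2 * p) + log (moment υ (a * p) 0 (y + μ)) := by
  simp only [E, K, moment, pow_zero, one_mul]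
  rfl

lemma hasDerivAt_E (hυ : 0 < υ) (hap : 0 < a * p) (y : ℝ) :
    HasDerivAt (fun y => E υ a y p μ)
      (-y / p + moment υ (a * p) 1 (y + μ) / moment υ (a * p) 0 (y + μ)) y := by
  have hq : HasDerivAt (fun y : ℝ => -(y ^ 2) / (2 * p)) (-y / p) y := by
    refine (((hasDerivAt_pow 2 y).neg).div_const (2 * p)).congr_deriv ?_
    push_cast
    ring
  have hlog := ((hasDerivAt_moment hυ hap 0 (y + μ)).log
    (moment_zero_pos hυ hap (y + μ)).ne').comp_add_const y μ
  rw [funext E_eq_log_moment]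
  exact hq.add hlog

lemma deriv_E (hυ : 0 < υ) (hap : 0 < a * p) :
    deriv (fun y => E υ a y p μ)
      = fun y => -y / p + moment υ (a * p) 1 (y + μ) / moment υ (a * p) 0 (y + μ) :=
  funext fun y => (hasDerivAt_E hυ hap y).deriv

lemma hasDerivAt_deriv_E (hυ : 0 < υ) (hap : 0 < a * p) (y : ℝ) :
    HasDerivAt (deriv fun y => E υ a y p μ)
      (-1 / p + (moment υ (a * p) 2 (y + μ) * moment υ (a * p) 0 (y + μ)
        - moment υ (a * p) 1 (y + μ) ^ 2) / moment υ (a * p) 0 (y + μ) ^ 2) y := by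
  rw [deriv_E hυ hap]
  have h1 : HasDerivAt (fun y : ℝ => -y / p) (-1 / p) y := (hasDerivAt_id y).neg.div_const p
  have h2 := ((hasDerivAt_moment hυ hap 1 (y + μ)).div (hasDerivAt_moment hυ hap 0 (y + μ))
    (moment_zero_pos hυ hap (y + μ)).ne').comp_add_const y μ
  refine (h1.add h2).congr_deriv ?_
  rw [zero_add, show 1 + 1 = 2 from rfl]
  ring

lemma iterate_deriv_E_neg (hυ : 0 < υ) (ha : 1 < a) (hp : 0 < p)
    (hp₀ : p ≤ (a - 1) ^ 2 / (8 * a ^ 2)) (y : ℝ) : deriv^[2] (fun y => E υ a y p μ) y < 0 := by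
  have hap : 0 < a * p := mul_pos (by linarith) hp
  have hε : 0 < (a - 1) / (2 * a) := div_pos (by linarith) (by linarith)
  have hε1 : (a - 1) / (2 * a) ≤ 1 := by rw [div_le_one (by linarith)]; linarith
  have hvar := one_sub_mul_variance_le hυ hap hε hε1 (y + μ)
  have hM0 := moment_zero_pos hυ hap (y + μ)
  rw [← div_le_iff₀ (by positivity), mul_div_assoc] at hvar
  show deriv (deriv fun y => E υ a y p μ) y < 0
  rw [(hasDerivAt_deriv_E hυ hap y).deriv, neg_div]
  linarith [lt_one_div_of_one_sub_mul_le ha hp hp₀ hvar]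

lemma E_le_neg_mul_sq_add (hυ : 0 < υ) (ha : 1 < a) (hp : 0 < p) (y : ℝ) :
    E υ a y p μ
      ≤ -((a - 1) / (4 * a * p)) * y ^ 2 + (υ + (a + 1) * μ ^ 2 / (2 * a * p * (a - 1))) := by
  have ha1 : 0 < a - 1 := sub_pos.mpr ha
  have hap : 0 < a * p := mul_pos (by linarith) hp
  have hlog := log_moment_zero_le hυ hap (y + μ)
  have key : -(y ^ 2) / (2 * p) + (y + μ) ^ 2 / (2 * (a * p))
      = -((a - 1) / (4 * a * p)) * y ^ 2 + (a + 1) * μ ^ 2 / (2 * a * p * (a - 1))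
        - ((a - 1) * y - 2 * μ) ^ 2 / (4 * a * p * (a - 1)) := by
    field_simp
    ring
  have hsq : 0 ≤ ((a - 1) * y - 2 * μ) ^ 2 / (4 * a * p * (a - 1)) := by positivity
  rw [E_eq_log_moment]
  linarith

lemma tendsto_E_cocompact (hυ : 0 < υ) (ha : 1 < a) (hp : 0 < p) :
    Tendsto (fun y => E υ a y p μ) (cocompact ℝ) atBot := by
  have hκ : 0 < (a - 1) / (4 * a * p) := by
    have : 0 < a - 1 := sub_pos.mpr ha
    have : 0 < a := by linarith
    positivity
  have hsq : Tendsto (fun y : ℝ => y ^ 2) (cocompact ℝ) atTop := by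
    simpa only [Function.comp_def, norm_eq_abs, sq_abs] using
      (tendsto_pow_atTop two_ne_zero).comp (tendsto_norm_cocompact_atTop (E := ℝ))
  refine tendsto_atBot_mono (E_le_neg_mul_sq_add hυ ha hp) (tendsto_atBot_add_const_right _ _ ?_)
  simpa only [Function.comp_def, neg_mul] using
    tendsto_neg_atTop_atBot.comp (hsq.const_mul_atTop hκ)

end FreeEnergy

theorem stmt_0 (υ a : ℝ) (hυ : 0 < υ) (ha : 1 < a) :
    ∃ p₀ > (0 : ℝ), ∀ p : ℝ, 0 < p → p ≤ p₀ → ∀ μ : ℝ, ∃ ybar : ℝ,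
      (∀ y : ℝ, E υ a y p μ ≤ E υ a ybar p μ) ∧
      (∀ y' : ℝ, (∀ y : ℝ, E υ a y p μ ≤ E υ a y' p μ) → y' = ybar) ∧
      deriv (deriv (fun y => E υ a y p μ)) ybar < 0 := by
  have ha1 : 0 < a - 1 := sub_pos.mpr ha
  refine ⟨(a - 1) ^ 2 / (8 * a ^ 2), by positivity, fun p hp hp₀ μ => ?_⟩
  have hap : 0 < a * p := mul_pos (by linarith) hp
  have hE2 := iterate_deriv_E_neg (μ := μ) hυ ha hp hp₀
  have hcont : Continuous fun y => E υ a y p μ :=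
    continuous_iff_continuousAt.mpr fun y => (hasDerivAt_E hυ hap y).continuousAt
  have hconc : StrictConcaveOn ℝ Set.univ fun y => E υ a y p μ :=
    strictConcaveOn_of_deriv2_neg' convex_univ hcont.continuousOn fun y _ => hE2 y
  obtain ⟨ybar, hmax⟩ := hcont.exists_forall_ge (tendsto_E_cocompact hυ ha hp)
  refine ⟨ybar, hmax, fun y' hy' => ?_, hE2 ybar⟩
  exact hconc.eq_of_isMaxOn (isMaxOn_univ_iff.mpr hy') (isMaxOn_univ_iff.mpr hmax) trivial trivial
end

section
/- For each a > 1 and υ > 0 there exists p₁ > 0 such that for every p ≥ p₁ there exists μ_c ∈ ℝ and two distinct points ȳ₁ ≠ ȳ₂ in ℝ that are both global maximum points of the function y ↦ E(y,p,μ_c), i.e. E(ȳ₁,p,μ_c) = E(ȳ₂,p,μ_c) ≥ E(y,p,μ_c) for all y ∈ ℝ. (This is the existence of a phase coexistence point on each line {(p,μ) : μ ∈ ℝ} with p ≥ p₁.) -/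
/-!
Completing the square, `exp E(y) = ∑ₙ wₙ · exp (-(y - n p)² / (2p))`, where the phase weights
satisfy `wₙ ≤ exp E(n p)`. Hence at a global maximizer `t` every term is at most
`exp E(t) · exp (-(t - n p)² / (2p))`, and for `p ≥ 128` these Gaussians are so narrow that `t`
cannot lie in `[p/4, 3p/4]` (the sum would be `≤ 1/5 + 2/5 · exp E(t) < exp E(t)`). By the same
estimate every maximizer lies left of `p/4` when `υ e^μ ≤ 1/3`, and right of it when
`υ e^{μ - (a-1)p/2} ≥ 3`. Since `E` is coercive and jointly continuous in `(y, μ)`, maximizers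
exist, stay bounded for bounded `μ`, and form a closed set; at the supremum `μ_c` of the chemical
potentials having a maximizer left of the gap, maximizers on both sides of the gap coexist.
-/

open Real Set Filter Function

namespace PhaseCoexistence

theorem isCompact_setOf_exists_maximizer {X Y α : Type*} [TopologicalSpace X]
    [TopologicalSpace Y] [TopologicalSpace α] [Preorder α] [OrderClosedTopology α]
    {F : X → Y → α} (hF : Continuous (uncurry F))
    {I : Set X} {J : Set Y} (hI : IsCompact I) (hJ : IsCompact J) :
    IsCompact {μ | μ ∈ I ∧ ∃ t ∈ J, ∀ y, F μ y ≤ F μ t} := by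
  have hclosed : IsClosed {z : X × Y | ∀ y, F z.1 y ≤ F z.1 z.2} := by
    simp only [ofPred_forall]
    exact isClosed_iInter fun y =>
      isClosed_le (hF.comp (continuous_fst.prodMk continuous_const)) hF
  convert ((hI.prod hJ).inter_right hclosed).image continuous_fst using 1
  ext μ
  simp only [mem_ofPred_eq, mem_image, mem_inter_iff, mem_prod, Prod.exists, exists_and_right,
    exists_eq_right]
  tauto

theorem exists_maximizers_on_both_sides {F : ℝ → ℝ → ℝ} (hF : Continuous (uncurry F))
    {μ₀ μ₁ c d R : ℝ} (hμ : μ₀ ≤ μ₁)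
    (hex : ∀ μ ∈ Icc μ₀ μ₁, ∃ t, ∀ y, F μ y ≤ F μ t)
    (hbound : ∀ μ ∈ Icc μ₀ μ₁, ∀ t, (∀ y, F μ y ≤ F μ t) → |t| ≤ R)
    (hgap : ∀ μ ∈ Icc μ₀ μ₁, ∀ t, (∀ y, F μ y ≤ F μ t) → t ≤ c ∨ d ≤ t)
    (h₀ : ∃ t ≤ c, ∀ y, F μ₀ y ≤ F μ₀ t) (h₁ : ∀ t ≤ c, ¬ ∀ y, F μ₁ y ≤ F μ₁ t) :
    ∃ μ t₁ t₂, t₁ ≤ c ∧ d ≤ t₂ ∧ (∀ y, F μ y ≤ F μ t₁) ∧ ∀ y, F μ y ≤ F μ t₂ := by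
  set S := {μ | μ ∈ Icc μ₀ μ₁ ∧ ∃ t ∈ Icc (-R) c, ∀ y, F μ y ≤ F μ t}
  set T := {μ | μ ∈ Icc μ₀ μ₁ ∧ ∃ t ∈ Icc d R, ∀ y, F μ y ≤ F μ t}
  have hS : IsCompact S := isCompact_setOf_exists_maximizer hF isCompact_Icc isCompact_Icc
  have hT : IsClosed T :=
    (isCompact_setOf_exists_maximizer hF isCompact_Icc isCompact_Icc).isClosed
  have hμ₀S : μ₀ ∈ S := by
    obtain ⟨t, htc, ht⟩ := h₀
    have hμ₀ : μ₀ ∈ Icc μ₀ μ₁ := ⟨le_rfl, hμ⟩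
    exact ⟨hμ₀, t, ⟨(abs_le.1 (hbound μ₀ hμ₀ t ht)).1, htc⟩, ht⟩
  -- the maximizer sets are closed, so `μc` has a maximizer left of the gap and is a limit of
  -- parameters whose maximizers all lie right of it
  set μc := sSup S
  have hμcS : μc ∈ S := hS.sSup_mem ⟨μ₀, hμ₀S⟩
  obtain ⟨⟨-, hμc₁⟩, t₁, ⟨-, ht₁c⟩, ht₁⟩ := hμcS
  have hμc_lt : μc < μ₁ := hμc₁.lt_of_ne fun h => h₁ t₁ ht₁c (h ▸ ht₁)
  have hright : Ioc μc μ₁ ⊆ T := by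
    intro μ ⟨hμc_lt_μ, hμμ₁⟩
    have hμI : μ ∈ Icc μ₀ μ₁ := ⟨(le_csSup hS.bddAbove hμ₀S).trans hμc_lt_μ.le, hμμ₁⟩
    obtain ⟨t, ht⟩ := hex μ hμI
    have htR := abs_le.1 (hbound μ hμI t ht)
    refine ⟨hμI, t, ⟨(hgap μ hμI t ht).resolve_left fun htc => ?_, htR.2⟩, ht⟩
    exact hμc_lt_μ.not_ge (le_csSup hS.bddAbove ⟨hμI, t, ⟨htR.1, htc⟩, ht⟩)
  have hμcT : μc ∈ T := by
    refine hT.closure_subset_iff.2 hright ?_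
    rw [closure_Ioc hμc_lt.ne]
    exact left_mem_Icc.2 hμc_lt.le
  obtain ⟨-, t₂, ⟨ht₂d, -⟩, ht₂⟩ := hμcT
  exact ⟨μc, t₁, t₂, ht₁c, ht₂d, ht₁, ht₂⟩

variable {υ a p : ℝ}

noncomputable def Kterm (υ a p x : ℝ) (n : ℕ) : ℝ :=
  υ ^ n / (Nat.factorial n : ℝ) * exp (x * n - a * p / 2 * (n : ℝ) ^ 2)

theorem K_eq_tsum_Kterm (υ a y p μ : ℝ) : K υ a y p μ = ∑' n, Kterm υ a p (y + μ) n := rfl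

theorem Kterm_nonneg (hυ : 0 ≤ υ) (x : ℝ) (n : ℕ) : 0 ≤ Kterm υ a p x n := by
  unfold Kterm; positivity

theorem Kterm_le_of_le (hυ : 0 ≤ υ) (hap : 0 ≤ a * p) {x b : ℝ} (hxb : x ≤ b) (n : ℕ) :
    Kterm υ a p x n ≤ (υ * exp b) ^ n / (Nat.factorial n : ℝ) := by
  rw [Kterm, mul_pow, ← exp_nat_mul, mul_div_right_comm (υ ^ n)]
  refine mul_le_mul_of_nonneg_left (exp_le_exp.2 ?_) (by positivity)
  nlinarith [sq_nonneg (n : ℝ), (Nat.cast_nonneg n : (0 : ℝ) ≤ n)]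

theorem summable_Kterm (hυ : 0 ≤ υ) (hap : 0 ≤ a * p) (x : ℝ) : Summable (Kterm υ a p x) :=
  .of_nonneg_of_le (Kterm_nonneg hυ x) (Kterm_le_of_le hυ hap le_rfl)
    (summable_pow_div_factorial _)

theorem one_le_tsum_Kterm (hυ : 0 ≤ υ) (hap : 0 ≤ a * p) (x : ℝ) :
    1 ≤ ∑' n, Kterm υ a p x n := by
  simpa [Kterm] using (summable_Kterm hυ hap x).le_tsum 0 fun n _ => Kterm_nonneg hυ x n

theorem continuous_tsum_Kterm (hυ : 0 ≤ υ) (hap : 0 ≤ a * p) :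
    Continuous fun x => ∑' n, Kterm υ a p x n := by
  refine continuous_iff_continuousAt.2 fun x₀ => ?_
  refine ContinuousOn.continuousAt ?_ (Iio_mem_nhds (lt_add_one x₀))
  refine continuousOn_tsum (fun n => by unfold Kterm; fun_prop)
    (summable_pow_div_factorial (υ * exp (x₀ + 1))) fun n x hx => ?_
  rw [norm_of_nonneg (Kterm_nonneg hυ x n)]
  exact Kterm_le_of_le hυ hap (le_of_lt hx) n

theorem tsum_Kterm_le (hυ : 0 ≤ υ) (ha : 0 < a) (hp : 0 < p) (x : ℝ) :
    ∑' n, Kterm υ a p x n ≤ exp υ * exp (x ^ 2 / (2 * a * p)) := by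
  have hexp : HasSum (fun n : ℕ => υ ^ n / (Nat.factorial n : ℝ)) (exp υ) :=
    exp_eq_exp_ℝ ▸ NormedSpace.expSeries_div_hasSum_exp υ
  refine hasSum_le (fun n => ?_) (summable_Kterm hυ (by positivity) x).hasSum
    (hexp.mul_right _)
  -- completing the square: `x n - a p n² / 2 ≤ x² / (2 a p)`
  unfold Kterm
  gcongr
  rw [le_div_iff₀ (by positivity)]
  nlinarith [sq_nonneg (x - a * p * n)]

theorem continuous_uncurry_E (hυ : 0 ≤ υ) (hap : 0 ≤ a * p) :
    Continuous (uncurry fun μ y => E υ a y p μ) := by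
  have hK := continuous_tsum_Kterm hυ hap
  refine Continuous.add (by fun_prop) (Continuous.log ?_ fun z => ?_)
  · exact hK.comp (continuous_snd.add continuous_fst)
  · exact (zero_lt_one.trans_le (one_le_tsum_Kterm hυ hap _)).ne'

theorem E_zero_nonneg (hυ : 0 ≤ υ) (hap : 0 ≤ a * p) (μ : ℝ) : 0 ≤ E υ a 0 p μ := by
  simpa [E, K_eq_tsum_Kterm] using log_nonneg (one_le_tsum_Kterm hυ hap (0 + μ))

theorem E_le (hυ : 0 ≤ υ) (ha : 0 < a) (hp : 0 < p) (y μ : ℝ) :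
    E υ a y p μ ≤ υ + (y + μ) ^ 2 / (2 * a * p) - y ^ 2 / (2 * p) := by
  have hK := log_le_log (zero_lt_one.trans_le (one_le_tsum_Kterm hυ (by positivity) (y + μ)))
    (tsum_Kterm_le hυ ha hp (y + μ))
  rw [log_mul (exp_pos _).ne' (exp_pos _).ne', log_exp, log_exp] at hK
  rw [E, K_eq_tsum_Kterm, neg_div]
  linarith

theorem exists_abs_le_of_E_nonneg (hυ : 0 ≤ υ) (ha : 1 < a) (hp : 0 < p) (m : ℝ) :
    ∃ R, ∀ μ y, |μ| ≤ m → 0 ≤ E υ a y p μ → |y| ≤ R := by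
  have ha₁ : 0 < a - 1 := by linarith
  refine ⟨√(2 / (a - 1) * (2 * a * p * υ + (a + 1) / (a - 1) * m ^ 2)), fun μ y hμ hE => ?_⟩
  have hE' := hE.trans (E_le hυ (by linarith) hp y μ)
  have hquad : a * y ^ 2 ≤ 2 * a * p * υ + (y + μ) ^ 2 := by
    have hsplit : (y + μ) ^ 2 / (2 * a * p) - y ^ 2 / (2 * p)
        = ((y + μ) ^ 2 - a * y ^ 2) / (2 * a * p) := by
      field_simp
    have := (le_div_iff₀ (by positivity : 0 < 2 * a * p)).1
      (show -υ ≤ ((y + μ) ^ 2 - a * y ^ 2) / (2 * a * p) by linarith)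
    linarith
  -- Young's inequality `2 y μ ≤ (a - 1) / 2 * y² + 2 / (a - 1) * μ²`
  have hyoung : (y + μ) ^ 2 ≤ (a + 1) / 2 * y ^ 2 + (a + 1) / (a - 1) * μ ^ 2 := by
    have hsq : 0 ≤ ((a - 1) * y - 2 * μ) ^ 2 / (2 * (a - 1)) := by positivity
    have hid : (a + 1) / 2 * y ^ 2 + (a + 1) / (a - 1) * μ ^ 2 - (y + μ) ^ 2
        = ((a - 1) * y - 2 * μ) ^ 2 / (2 * (a - 1)) := by
      field_simp
      ring
    linarith
  have hμm : μ ^ 2 ≤ m ^ 2 := sq_le_sq.2 (hμ.trans (le_abs_self m))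
  refine abs_le_sqrt ?_
  calc y ^ 2 = 2 / (a - 1) * ((a - 1) / 2 * y ^ 2) := by field_simp
    _ ≤ 2 / (a - 1) * (2 * a * p * υ + (a + 1) / (a - 1) * m ^ 2) := by
      gcongr
      nlinarith [mul_le_mul_of_nonneg_left hμm (by positivity : 0 ≤ (a + 1) / (a - 1))]

theorem exists_forall_E_le (hυ : 0 ≤ υ) (ha : 1 < a) (hp : 0 < p) (μ : ℝ) :
    ∃ t, ∀ y, E υ a y p μ ≤ E υ a t p μ := by
  obtain ⟨R, hR⟩ := exists_abs_le_of_E_nonneg hυ ha hp |μ|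
  refine ((continuous_uncurry_E hυ (by nlinarith)).comp
    (continuous_const.prodMk continuous_id)).exists_forall_ge' 0 ?_
  filter_upwards [(isCompact_closedBall (0 : ℝ) R).compl_mem_cocompact] with y hy
  have hyR : R < |y| := by simpa using hy
  have hE : E υ a y p μ < 0 := not_le.1 fun hE => hyR.not_ge (hR μ y le_rfl hE)
  exact hE.le.trans (E_zero_nonneg hυ (by nlinarith) μ)

noncomputable def weight (υ a p μ : ℝ) (n : ℕ) : ℝ :=
  υ ^ n / (Nat.factorial n : ℝ) * exp (μ * n - (a - 1) * p / 2 * (n : ℝ) ^ 2)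

noncomputable def gauss (p t : ℝ) (n : ℕ) : ℝ := exp (-(t - n * p) ^ 2 / (2 * p))

theorem weight_nonneg (hυ : 0 ≤ υ) (μ : ℝ) (n : ℕ) : 0 ≤ weight υ a p μ n := by
  unfold weight; positivity

theorem weight_le_pow (hυ : 0 ≤ υ) (ha : 1 ≤ a) (hp : 0 ≤ p) (μ : ℝ) (n : ℕ) :
    weight υ a p μ n ≤ (υ * exp μ) ^ n := by
  have hfac : (1 : ℝ) ≤ Nat.factorial n := by exact_mod_cast n.factorial_pos
  calc weight υ a p μ n ≤ υ ^ n / 1 * exp (μ * n) := by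
        unfold weight
        gcongr
        nlinarith [mul_nonneg (mul_nonneg (sub_nonneg.2 ha) hp) (sq_nonneg (n : ℝ))]
    _ = (υ * exp μ) ^ n := by rw [div_one, mul_pow, ← exp_nat_mul, mul_comm μ]

theorem hasSum_weight_mul_gauss (hυ : 0 ≤ υ) (ha : 0 ≤ a) (hp : 0 < p) (μ t : ℝ) :
    HasSum (fun n => weight υ a p μ n * gauss p t n) (exp (E υ a t p μ)) := by
  have hap : 0 ≤ a * p := by positivity
  rw [E, exp_add, K_eq_tsum_Kterm, exp_log (zero_lt_one.trans_le (one_le_tsum_Kterm hυ hap _))]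
  have hterm : (fun n => weight υ a p μ n * gauss p t n)
      = fun n => exp (-t ^ 2 / (2 * p)) * Kterm υ a p (t + μ) n := by
    funext n
    rw [weight, gauss, Kterm, mul_assoc, mul_left_comm (exp _), ← exp_add, ← exp_add]
    congr 2
    field_simp
    ring
  rw [hterm]
  exact (summable_Kterm hυ hap (t + μ)).hasSum.mul_left _

theorem weight_le_exp_E (hυ : 0 ≤ υ) (ha : 0 ≤ a) (hp : 0 < p) (μ : ℝ) (n : ℕ) :
    weight υ a p μ n ≤ exp (E υ a (n * p) p μ) := by
  have hle := le_hasSum (hasSum_weight_mul_gauss hυ ha hp μ (n * p)) n fun j _ =>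
    mul_nonneg (weight_nonneg hυ μ j) (exp_pos _).le
  simpa [gauss] using hle

theorem gauss_le_one (hp : 0 ≤ p) (t : ℝ) (n : ℕ) : gauss p t n ≤ 1 :=
  exp_le_one_iff.2 (div_nonpos_of_nonpos_of_nonneg (neg_nonpos.2 (sq_nonneg _)) (by positivity))

theorem exp_neg_four_le : exp (-4) ≤ 1 / 5 := by
  rw [exp_neg, inv_le_comm₀ (exp_pos _) (by norm_num)]
  linarith [add_one_le_exp (4 : ℝ)]

theorem gauss_zero_le (hp : 128 ≤ p) {t : ℝ} (ht : p / 4 ≤ t) : gauss p t 0 ≤ 1 / 5 := by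
  refine le_trans (exp_le_exp.2 ?_) exp_neg_four_le
  rw [div_le_iff₀ (by positivity)]
  push_cast
  nlinarith

theorem gauss_succ_le (hp : 128 ≤ p) {t : ℝ} (ht : t ≤ 3 * p / 4) (n : ℕ) :
    gauss p t (n + 1) ≤ 1 / 5 * (1 / 2) ^ n := by
  have hexp1 : exp (-1) ≤ 1 / 2 := by
    rw [exp_neg, inv_le_comm₀ (exp_pos _) (by norm_num)]
    linarith [add_one_le_exp (1 : ℝ)]
  calc gauss p t (n + 1) ≤ exp (-4 + n * (-1)) := by
        refine exp_le_exp.2 ?_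
        rw [div_le_iff₀ (by positivity)]
        have hn : (0 : ℝ) ≤ n := n.cast_nonneg
        push_cast
        nlinarith [mul_nonneg hn (by linarith : (0 : ℝ) ≤ p - 4)]
    _ = exp (-4) * exp (-1) ^ n := by rw [exp_add, exp_nat_mul]
    _ ≤ 1 / 5 * (1 / 2) ^ n := by gcongr; exact exp_neg_four_le

theorem exp_E_eq_gauss_add_tsum (hυ : 0 ≤ υ) (ha : 0 ≤ a) (hp : 0 < p) (μ t : ℝ) :
    exp (E υ a t p μ) = gauss p t 0 + ∑' n, weight υ a p μ (n + 1) * gauss p t (n + 1) := by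
  have hsum := hasSum_weight_mul_gauss hυ ha hp μ t
  rw [← hsum.tsum_eq, hsum.summable.tsum_eq_zero_add]
  simp [weight]

section Maximizer

variable {μ t : ℝ} (hυ : 0 ≤ υ) (ha : 1 ≤ a) (hmax : ∀ y, E υ a y p μ ≤ E υ a t p μ)
include hυ ha hmax

theorem one_le_exp_E_of_forall_le (hp : 0 < p) : 1 ≤ exp (E υ a t p μ) :=
  one_le_exp ((E_zero_nonneg hυ (by nlinarith) μ).trans (hmax 0))

theorem weight_le_exp_E_of_forall_le (hp : 0 < p) (n : ℕ) :
    weight υ a p μ n ≤ exp (E υ a t p μ) :=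
  (weight_le_exp_E hυ (zero_le_one.trans ha) hp μ n).trans (exp_le_exp.2 (hmax _))

theorem tsum_succ_le_of_forall_le (hp : 128 ≤ p) (ht : t ≤ 3 * p / 4) :
    ∑' n, weight υ a p μ (n + 1) * gauss p t (n + 1) ≤ 2 / 5 * exp (E υ a t p μ) := by
  have hp₀ : 0 < p := by linarith
  have htail := (summable_nat_add_iff 1).2
    (hasSum_weight_mul_gauss hυ (zero_le_one.trans ha) hp₀ μ t).summable
  have hle := hasSum_le (fun n => mul_le_mul (weight_le_exp_E_of_forall_le hυ ha hmax hp₀ _)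
    (gauss_succ_le hp ht n) (exp_pos _).le (exp_pos _).le) htail.hasSum
    ((hasSum_geometric_two.mul_left (1 / 5)).mul_left (exp (E υ a t p μ)))
  linarith

theorem lt_or_lt_of_forall_le (hp : 128 ≤ p) : t < p / 4 ∨ 3 * p / 4 < t := by
  by_contra! ht
  obtain ⟨ht₁, ht₂⟩ := ht
  have hp₀ : 0 < p := by linarith
  have hsplit := exp_E_eq_gauss_add_tsum hυ (zero_le_one.trans ha) hp₀ μ t
  have := one_le_exp_E_of_forall_le hυ ha hmax hp₀
  linarith [gauss_zero_le hp ht₁, tsum_succ_le_of_forall_le hυ ha hmax hp ht₂]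

theorem lt_of_forall_le_of_exp_le (hp : 128 ≤ p) (hμ : υ * exp μ ≤ 1 / 3) : t < p / 4 := by
  by_contra! ht
  have hp₀ : 0 < p := by linarith
  have hsplit := exp_E_eq_gauss_add_tsum hυ (zero_le_one.trans ha) hp₀ μ t
  have htail := (summable_nat_add_iff 1).2
    (hasSum_weight_mul_gauss hυ (zero_le_one.trans ha) hp₀ μ t).summable
  have hterm (n : ℕ) : weight υ a p μ (n + 1) * gauss p t (n + 1) ≤ 1 / 3 * (1 / 3) ^ n := by
    calc weight υ a p μ (n + 1) * gauss p t (n + 1) ≤ (υ * exp μ) ^ (n + 1) * 1 :=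
          mul_le_mul (weight_le_pow hυ ha hp₀.le μ _) (gauss_le_one hp₀.le t _)
            (exp_pos _).le (by positivity)
      _ ≤ (1 / 3) ^ (n + 1) * 1 := by gcongr
      _ = 1 / 3 * (1 / 3) ^ n := by ring
  have hle := hasSum_le hterm htail.hasSum
    ((hasSum_geometric_of_lt_one (by norm_num) (by norm_num)).mul_left (1 / 3))
  have := one_le_exp_E_of_forall_le hυ ha hmax hp₀
  norm_num at hle
  linarith [gauss_zero_le hp ht]

theorem lt_of_forall_le_of_le_exp (hp : 128 ≤ p) (hμ : 3 ≤ υ * exp (μ - (a - 1) * p / 2)) :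
    p / 4 < t := by
  by_contra! ht
  have hp₀ : 0 < p := by linarith
  have hsplit := exp_E_eq_gauss_add_tsum hυ (zero_le_one.trans ha) hp₀ μ t
  have hweight := weight_le_exp_E_of_forall_le hυ ha hmax hp₀ 1
  simp only [weight, pow_one, Nat.factorial_one, Nat.cast_one, div_one, mul_one, one_pow]
    at hweight
  linarith [gauss_le_one hp₀.le t 0, tsum_succ_le_of_forall_le hυ ha hmax hp (by linarith)]

end Maximizer

theorem exists_exp_le_le_exp (hυ : 0 < υ) (ha : 1 ≤ a) (hp : 0 ≤ p) :
    ∃ μ₀ μ₁, μ₀ ≤ μ₁ ∧ υ * exp μ₀ ≤ 1 / 3 ∧ 3 ≤ υ * exp (μ₁ - (a - 1) * p / 2) := by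
  refine ⟨log (1 / (3 * υ)), (a - 1) * p / 2 + log (3 / υ), ?_, ?_, ?_⟩
  · have hlog : log (1 / (3 * υ)) ≤ log (3 / υ) :=
      log_le_log (by positivity) (by rw [div_le_div_iff₀ (by positivity) hυ]; nlinarith)
    have hshift : 0 ≤ (a - 1) * p / 2 := by nlinarith
    exact hlog.trans (le_add_of_nonneg_left hshift)
  · rw [exp_log (by positivity), mul_one_div, div_mul_cancel_right₀ hυ.ne']
    norm_num
  · rw [add_sub_cancel_left, exp_log (by positivity), mul_div_cancel₀ _ hυ.ne']

end PhaseCoexistence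

open PhaseCoexistence in
theorem stmt_1 (υ a : ℝ) (hυ : 0 < υ) (ha : 1 < a) :
    ∃ p₁ > (0 : ℝ), ∀ p : ℝ, p₁ ≤ p → ∃ μc ybar₁ ybar₂ : ℝ,
      ybar₁ ≠ ybar₂ ∧
      E υ a ybar₁ p μc = E υ a ybar₂ p μc ∧
      (∀ y : ℝ, E υ a y p μc ≤ E υ a ybar₁ p μc) := by
  refine ⟨128, by norm_num, fun p hp => ?_⟩
  have hp₀ : 0 < p := by linarith
  obtain ⟨μ₀, μ₁, hμ₀₁, hμ₀, hμ₁⟩ := exists_exp_le_le_exp hυ ha.le hp₀.le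
  obtain ⟨R, hR⟩ := exists_abs_le_of_E_nonneg hυ.le ha hp₀ (max |μ₀| |μ₁|)
  obtain ⟨μc, t₁, t₂, ht₁, ht₂, hmax₁, hmax₂⟩ :=
    exists_maximizers_on_both_sides (F := fun μ y => E υ a y p μ) (c := p / 4) (d := 3 * p / 4)
      (continuous_uncurry_E hυ.le (by nlinarith)) hμ₀₁
      (fun μ _ => exists_forall_E_le hυ.le ha hp₀ μ)
      (fun μ hμ t ht => hR μ t (abs_le_max_abs_abs hμ.1 hμ.2)
        ((E_zero_nonneg hυ.le (by nlinarith) μ).trans (ht 0)))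
      (fun μ _ t ht => (lt_or_lt_of_forall_le hυ.le ha.le ht hp).imp le_of_lt le_of_lt)
      (by
        obtain ⟨t, ht⟩ := exists_forall_E_le hυ.le ha hp₀ μ₀
        exact ⟨t, (lt_of_forall_le_of_exp_le hυ.le ha.le ht hp hμ₀).le, ht⟩)
      (fun t htc ht => (lt_of_forall_le_of_le_exp hυ.le ha.le ht hp hμ₁).not_ge htc)
  exact ⟨μc, t₁, t₂, by intro h; linarith, le_antisymm (hmax₂ t₁) (hmax₁ t₂), hmax₁⟩
end

section
/- For every N ∈ ℕ with N ≥ 1, every p > 0 and every μ ∈ ℝ, the partition function admits the integral representation Ξ_N(p,μ) = √(N/(2πp)) · ∫_ℝ exp(N·E(y,p,μ)) dy; in particular both the sum defining Ξ_N and the integral are finite. -/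
/-- The weight `π(n,μ)` of occupation number `n`. -/
noncomputable def ppi (υ a p μ : ℝ) (n : ℕ) : ℝ :=
  (υ ^ n / (Nat.factorial n : ℝ)) * Real.exp (μ * n - (a * p / 2) * (n : ℝ) ^ 2)

/-- The grand canonical partition function `Ξ_N(p,μ)`. -/
noncomputable def Xi (υ a : ℝ) (N : ℕ) (p μ : ℝ) : ℝ :=
  ∑' ρ : Fin N → ℕ, Real.exp ((p / (2 * N)) * (∑ ℓ, (ρ ℓ : ℝ)) ^ 2) *
    ∏ ℓ, ppi υ a p μ (ρ ℓ)

/-- The finite-volume pressure `P_N(p,μ)`. -/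
noncomputable def Pfin (υ a : ℝ) (N : ℕ) (p μ : ℝ) : ℝ :=
  (1 / (υ * N)) * Real.log (Xi υ a N p μ)

open Real MeasureTheory Finset

lemma exp_neg_mul_sq_add_mul_eq {γ : ℝ} (hγ : γ ≠ 0) (s y : ℝ) :
    exp (-γ * y ^ 2 + s * y) = exp (s ^ 2 / (4 * γ)) * exp (-γ * (y - s / (2 * γ)) ^ 2) := by
  rw [← exp_add]
  congr 1
  field_simp
  ring

lemma integrable_exp_neg_mul_sq_add_mul {γ : ℝ} (hγ : 0 < γ) (s : ℝ) :
    Integrable fun y : ℝ => exp (-γ * y ^ 2 + s * y) := by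
  simp_rw [exp_neg_mul_sq_add_mul_eq hγ.ne']
  exact ((integrable_exp_neg_mul_sq hγ).comp_sub_right _).const_mul _

lemma integral_exp_neg_mul_sq_add_mul {γ : ℝ} (hγ : 0 < γ) (s : ℝ) :
    ∫ y : ℝ, exp (-γ * y ^ 2 + s * y) = √(π / γ) * exp (s ^ 2 / (4 * γ)) := by
  simp_rw [exp_neg_mul_sq_add_mul_eq hγ.ne']
  rw [integral_const_mul, integral_sub_right_eq_self (fun y : ℝ => exp (-γ * y ^ 2)),
    integral_gaussian, mul_comm]

lemma hasSum_pi_prod {β : Type*} {g : β → ℝ} {s : ℝ} (hg : HasSum g s) (hg0 : 0 ≤ g)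
    (N : ℕ) : HasSum (fun ρ : Fin N → β => ∏ ℓ, g (ρ ℓ)) (s ^ N) := by
  induction N with
  | zero => simp
  | succ N ih =>
    set G := fun ρ : Fin N → β => ∏ ℓ, g (ρ ℓ)
    have hG0 : 0 ≤ G := fun ρ => prod_nonneg fun ℓ _ => hg0 (ρ ℓ)
    have hcons : (fun ρ : Fin (N + 1) → β => ∏ ℓ, g (ρ ℓ)) ∘ Fin.consEquiv (fun _ => β) =
        fun z => g z.1 * G z.2 := by
      funext z
      simp [G, Fin.consEquiv, Fin.prod_univ_succ]
    rw [← (Fin.consEquiv fun _ => β).hasSum_iff, hcons, pow_succ']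
    exact hg.mul ih (hg.summable.mul_of_nonneg ih.summable hg0 hG0)

lemma mul_sq_sum_div_le_sum_mul_sq {p : ℝ} (hp : 0 ≤ p) {N : ℕ} (hN : 0 < N) (x : Fin N → ℝ) :
    p / (2 * N) * (∑ ℓ, x ℓ) ^ 2 ≤ ∑ ℓ, p / 2 * x ℓ ^ 2 := by
  have hCS : (∑ ℓ, x ℓ) ^ 2 ≤ N * ∑ ℓ, x ℓ ^ 2 := by
    simpa using sq_sum_le_card_mul_sum_sq (s := univ) (f := x)
  calc p / (2 * N) * (∑ ℓ, x ℓ) ^ 2 ≤ p / (2 * N) * (N * ∑ ℓ, x ℓ ^ 2) := by gcongr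
    _ = ∑ ℓ, p / 2 * x ℓ ^ 2 := by
      rw [← mul_sum]
      field_simp

section Weights

variable {υ a p μ : ℝ}

lemma ppi_nonneg (hυ : 0 ≤ υ) (n : ℕ) : 0 ≤ ppi υ a p μ n := by
  unfold ppi
  positivity

lemma summable_ppi (hυ : 0 ≤ υ) (hap : 0 ≤ a * p) : Summable (ppi υ a p μ) := by
  refine .of_nonneg_of_le (ppi_nonneg hυ) (fun n => ?_)
    (summable_pow_div_factorial (υ * exp μ))
  calc ppi υ a p μ n ≤ υ ^ n / n.factorial * exp (μ * n) := by
        unfold ppi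
        gcongr
        nlinarith [sq_nonneg (n : ℝ)]
    _ = (υ * exp μ) ^ n / n.factorial := by
        rw [mul_pow, mul_comm μ, exp_nat_mul]
        ring

lemma ppi_mul_exp (y : ℝ) (n : ℕ) : ppi υ a p μ n * exp (y * n) = ppi υ a p (y + μ) n := by
  unfold ppi
  rw [mul_assoc, ← exp_add]
  ring_nf

lemma ppi_mul_exp_sq (n : ℕ) : ppi υ a p μ n * exp (p / 2 * n ^ 2) = ppi υ (a - 1) p μ n := by
  unfold ppi
  rw [mul_assoc, ← exp_add]
  ring_nf

lemma K_eq_tsum_ppi (y : ℝ) : K υ a y p μ = ∑' n, ppi υ a p (y + μ) n := rfl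

lemma one_le_K (hυ : 0 ≤ υ) (hap : 0 ≤ a * p) (y : ℝ) : 1 ≤ K υ a y p μ :=
  calc 1 = ppi υ a p (y + μ) 0 := by simp [ppi]
    _ ≤ K υ a y p μ := (summable_ppi hυ hap).le_tsum 0 fun n _ => ppi_nonneg hυ n

end Weights

noncomputable def xiTerm (υ a : ℝ) (N : ℕ) (p μ : ℝ) (ρ : Fin N → ℕ) : ℝ :=
  exp (p / (2 * N) * (∑ ℓ, (ρ ℓ : ℝ)) ^ 2) * ∏ ℓ, ppi υ a p μ (ρ ℓ)

section PartitionFunction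

variable {υ a p μ : ℝ} {N : ℕ}

lemma xiTerm_nonneg (hυ : 0 ≤ υ) (ρ : Fin N → ℕ) : 0 ≤ xiTerm υ a N p μ ρ :=
  mul_nonneg (exp_nonneg _) (prod_nonneg fun _ _ => ppi_nonneg hυ _)

lemma xiTerm_le (hυ : 0 ≤ υ) (hp : 0 ≤ p) (hN : 0 < N) (ρ : Fin N → ℕ) :
    xiTerm υ a N p μ ρ ≤ ∏ ℓ, ppi υ (a - 1) p μ (ρ ℓ) := by
  simp_rw [xiTerm, ← ppi_mul_exp_sq, prod_mul_distrib, ← exp_sum, mul_comm (∏ ℓ, ppi υ a p μ _)]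
  gcongr
  · exact prod_nonneg fun _ _ => ppi_nonneg hυ _
  · exact mul_sq_sum_div_le_sum_mul_sq hp hN _

lemma summable_xiTerm (hυ : 0 ≤ υ) (ha : 1 ≤ a) (hp : 0 ≤ p) (hN : 0 < N) :
    Summable (xiTerm υ a N p μ) :=
  .of_nonneg_of_le (xiTerm_nonneg hυ) (xiTerm_le hυ hp hN)
    (hasSum_pi_prod (summable_ppi hυ (by nlinarith)).hasSum (ppi_nonneg hυ) N).summable

lemma one_le_Xi (hυ : 0 ≤ υ) (hsum : Summable (xiTerm υ a N p μ)) : 1 ≤ Xi υ a N p μ :=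
  calc 1 = xiTerm υ a N p μ 0 := by simp [xiTerm, ppi]
    _ ≤ Xi υ a N p μ := hsum.le_tsum 0 fun ρ _ => xiTerm_nonneg hυ ρ

end PartitionFunction

section HubbardStratonovich

variable {υ a p μ : ℝ} {N : ℕ}

lemma hasSum_exp_mul_E (hυ : 0 ≤ υ) (hap : 0 ≤ a * p) (y : ℝ) :
    HasSum (fun ρ : Fin N → ℕ =>
        (∏ ℓ, ppi υ a p μ (ρ ℓ)) * exp (-(N / (2 * p)) * y ^ 2 + (∑ ℓ, (ρ ℓ : ℝ)) * y))
      (exp (N * E υ a y p μ)) := by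
  have hE : exp (N * E υ a y p μ) = exp (-(N / (2 * p)) * y ^ 2) * K υ a y p μ ^ N := by
    rw [E, mul_add, exp_add, exp_nat_mul (log _), exp_log (one_pos.trans_le (one_le_K hυ hap y))]
    ring_nf
  have hterm : ∀ ρ : Fin N → ℕ,
      (∏ ℓ, ppi υ a p μ (ρ ℓ)) * exp (-(N / (2 * p)) * y ^ 2 + (∑ ℓ, (ρ ℓ : ℝ)) * y) =
        exp (-(N / (2 * p)) * y ^ 2) * ∏ ℓ, ppi υ a p (y + μ) (ρ ℓ) := by
    intro ρ
    simp_rw [← ppi_mul_exp y, prod_mul_distrib, ← exp_sum, exp_add, sum_mul, mul_comm (ρ _ : ℝ) y]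
    ring
  rw [hE, K_eq_tsum_ppi]
  simp_rw [hterm]
  exact (hasSum_pi_prod (summable_ppi hυ hap).hasSum (ppi_nonneg hυ) N).mul_left _

lemma integral_prod_ppi_mul_exp (hp : 0 < p) (hN : 0 < N) (ρ : Fin N → ℕ) :
    ∫ y, (∏ ℓ, ppi υ a p μ (ρ ℓ)) * exp (-(N / (2 * p)) * y ^ 2 + (∑ ℓ, (ρ ℓ : ℝ)) * y) =
      √(2 * π * p / N) * xiTerm υ a N p μ ρ := by
  have hN' : (0 : ℝ) < N := Nat.cast_pos.mpr hN
  rw [integral_const_mul, integral_exp_neg_mul_sq_add_mul (by positivity), xiTerm]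
  field_simp
  ring_nf

lemma integral_exp_mul_E (hυ : 0 ≤ υ) (ha : 1 ≤ a) (hp : 0 < p) (hN : 0 < N) :
    ∫ y, exp (N * E υ a y p μ) = √(2 * π * p / N) * Xi υ a N p μ := by
  have hap : 0 ≤ a * p := by nlinarith
  set F : (Fin N → ℕ) → ℝ → ℝ := fun ρ y =>
    (∏ ℓ, ppi υ a p μ (ρ ℓ)) * exp (-(N / (2 * p)) * y ^ 2 + (∑ ℓ, (ρ ℓ : ℝ)) * y)
  have hF_nonneg : ∀ ρ y, 0 ≤ F ρ y := fun ρ y =>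
    mul_nonneg (prod_nonneg fun _ _ => ppi_nonneg hυ _) (exp_nonneg _)
  have hF_int : ∀ ρ, Integrable (F ρ) := fun ρ =>
    (integrable_exp_neg_mul_sq_add_mul (by positivity) _).const_mul _
  have hF_norm : Summable fun ρ => ∫ y, ‖F ρ y‖ := by
    simp_rw [fun ρ y => norm_of_nonneg (hF_nonneg ρ y), F, integral_prod_ppi_mul_exp hp hN]
    exact (summable_xiTerm hυ ha hp.le hN).mul_left _
  calc ∫ y, exp (N * E υ a y p μ) = ∫ y, ∑' ρ, F ρ y := by
        simp_rw [F, (hasSum_exp_mul_E hυ hap _).tsum_eq]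
    _ = ∑' ρ, ∫ y, F ρ y := (integral_tsum_of_summable_integral_norm hF_int hF_norm).symm
    _ = √(2 * π * p / N) * Xi υ a N p μ := by
        simp_rw [F, integral_prod_ppi_mul_exp hp hN]
        exact tsum_mul_left

end HubbardStratonovich

theorem stmt_5 (υ a : ℝ) (hυ : 0 < υ) (ha : 1 < a) (N : ℕ) (hN : 1 ≤ N)
    (p μ : ℝ) (hp : 0 < p) :
    Summable (fun ρ : Fin N → ℕ =>
      Real.exp ((p / (2 * N)) * (∑ ℓ, (ρ ℓ : ℝ)) ^ 2) * ∏ ℓ, ppi υ a p μ (ρ ℓ)) ∧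
    MeasureTheory.Integrable (fun y : ℝ => Real.exp (N * E υ a y p μ)) ∧
    Xi υ a N p μ =
      Real.sqrt (N / (2 * Real.pi * p)) * ∫ y : ℝ, Real.exp (N * E υ a y p μ) := by
  have hsum : Summable (xiTerm υ a N p μ) := summable_xiTerm hυ.le ha.le hp.le hN
  have hint := integral_exp_mul_E (μ := μ) hυ.le ha.le hp hN
  have hXi := one_le_Xi hυ.le hsum
  -- a non-integrable function would have Bochner integral `0`, but `Ξ_N ≥ 1`
  refine ⟨hsum, .of_integral_ne_zero (by rw [hint]; positivity), ?_⟩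
  have hN' : (0 : ℝ) < N := Nat.cast_pos.mpr hN
  rw [hint, ← mul_assoc, ← sqrt_mul (by positivity), div_mul_div_cancel₀ (by positivity),
    div_self (by positivity), sqrt_one, one_mul]
end

section
/- For all p > 0, μ ∈ ℝ and y ∈ ℝ one has the upper bound E(y,p,μ) ≤ −((a−1)/(2ap))·y² + (μ/(2ap))·(2y + μ) + υ. -/
theorem stmt_7 (υ a : ℝ) (hυ : 0 < υ) (ha : 1 < a) (p μ y : ℝ) (hp : 0 < p) :
    E υ a y p μ ≤ -((a - 1) / (2 * a * p)) * y ^ 2 + (μ / (2 * a * p)) * (2 * y + μ) + υ := by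
  have hap : 0 < a * p := by positivity
  set c : ℝ := (y + μ) ^ 2 / (2 * (a * p)) with hc
  set f : ℕ → ℝ := fun n => (υ ^ n / (Nat.factorial n : ℝ)) *
    Real.exp ((y + μ) * n - (a * p / 2) * (n : ℝ) ^ 2) with hf
  have hnonneg : ∀ n, 0 ≤ f n := fun n => by positivity
  have hterm : ∀ n : ℕ, f n ≤ (υ ^ n / (Nat.factorial n : ℝ)) * Real.exp c := by
    intro n
    apply mul_le_mul_of_nonneg_left _ (by positivity)
    apply Real.exp_le_exp.mpr
    rw [hc, le_div_iff₀ (by positivity)]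
    nlinarith [sq_nonneg ((y + μ) - a * p * n)]
  have hsum2 : Summable (fun n : ℕ => (υ ^ n / (Nat.factorial n : ℝ)) * Real.exp c) :=
    (Real.summable_pow_div_factorial υ).mul_right _
  have hsum1 : Summable f := hsum2.of_nonneg_of_le hnonneg hterm
  have hKdef : K υ a y p μ = ∑' n, f n := rfl
  have hK_ge : (1 : ℝ) ≤ K υ a y p μ := by
    have h0 : f 0 = 1 := by simp [hf]
    calc (1 : ℝ) = f 0 := h0.symm
    _ ≤ ∑' n, f n := Summable.le_tsum hsum1 0 (fun j _ => hnonneg j)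
    _ = K υ a y p μ := hKdef.symm
  have hK_pos : 0 < K υ a y p μ := lt_of_lt_of_le one_pos hK_ge
  have hK_le : K υ a y p μ ≤ Real.exp υ * Real.exp c := by
    rw [hKdef]
    calc ∑' n, f n ≤ ∑' n : ℕ, (υ ^ n / (Nat.factorial n : ℝ)) * Real.exp c :=
          Summable.tsum_le_tsum hterm hsum1 hsum2
      _ = (∑' n : ℕ, (υ ^ n / (Nat.factorial n : ℝ))) * Real.exp c := tsum_mul_right
      _ = Real.exp υ * Real.exp c := by
          congr 1
          rw [Real.exp_eq_exp_ℝ, NormedSpace.exp_eq_tsum_div]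
  have hlog : Real.log (K υ a y p μ) ≤ υ + c := by
    calc Real.log (K υ a y p μ) ≤ Real.log (Real.exp υ * Real.exp c) :=
          Real.log_le_log hK_pos hK_le
      _ = υ + c := by rw [← Real.exp_add, Real.log_exp]
  have key : -(y ^ 2) / (2 * p) + (υ + c) =
      -((a - 1) / (2 * a * p)) * y ^ 2 + (μ / (2 * a * p)) * (2 * y + μ) + υ := by
    rw [hc]
    field_simp
    ring
  have : E υ a y p μ ≤ -(y ^ 2) / (2 * p) + (υ + c) := by
    unfold E; linarith
  linarith [this, key.le]
end
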